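/- Fix m ≥ 3. If u, v ∈ ℝ^{\binom{m}{2}} both satisfy the three-point condition (for every triple of distinct i, j, k, the maximum of {x_{ij}, x_{ik}, x_{jk}} is attained at least twice), then every point z of the tropical line segment between u and v, i.e., every z with z_{ij} = max(c₁ + u_{ij}, c₂ + v_{ij}) for some c₁, c₂ ∈ ℝ, also satisfies the three-point condition. Hence the tropical line segment between two ultrametrics is contained in the space of ultrametrics (up to adding multiples of the all-ones vector). -/

import Mathlib

/-- The maximum of `{a, b, c}` is attained at least twice: two of the three
values are equal and are greater than or equal to the third. -/
def MaxAttainedTwice (a b c : ℝ) : Prop :=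
  (a = b ∧ c ≤ a) ∨ (a = c ∧ b ≤ a) ∨ (b = c ∧ a ≤ b)

/-- The three-point condition for a vector indexed by (unordered) pairs of
elements of `{1,…,m}`, encoded as a symmetric function `Fin m → Fin m → ℝ`:
for every triple of distinct indices, the maximum of the three pairwise
coordinates is attained at least twice (the ultrametric condition). -/
def ThreePointCond {m : ℕ} (x : Fin m → Fin m → ℝ) : Prop :=
  ∀ i j k : Fin m, i ≠ j → i ≠ k → j ≠ k →
    MaxAttainedTwice (x i j) (x i k) (x j k)

/-! Writing the three-point condition as "each value is at most the maximum of the other two"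
makes it a conjunction of inequalities `x ≤ max y z`, and such inequalities are preserved by
tropical scalar multiplication (adding a constant) and by tropical addition (coordinatewise
maximum). -/

theorem maxAttainedTwice_iff_le_max {a b c : ℝ} :
    MaxAttainedTwice a b c ↔ a ≤ max b c ∧ b ≤ max a c ∧ c ≤ max a b := by
  unfold MaxAttainedTwice
  simp only [le_max_iff]
  grind

theorem MaxAttainedTwice.const_add (t : ℝ) {a b c : ℝ} (h : MaxAttainedTwice a b c) :
    MaxAttainedTwice (t + a) (t + b) (t + c) := by
  rw [maxAttainedTwice_iff_le_max] at h ⊢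
  simpa only [max_add_add_left, add_le_add_iff_left] using h

theorem MaxAttainedTwice.max {a b c a' b' c' : ℝ} (h : MaxAttainedTwice a b c)
    (h' : MaxAttainedTwice a' b' c') :
    MaxAttainedTwice (max a a') (max b b') (max c c') := by
  rw [maxAttainedTwice_iff_le_max] at h h' ⊢
  rw [max_max_max_comm b, max_max_max_comm a a' c, max_max_max_comm a a' b]
  exact ⟨max_le_max h.1 h'.1, max_le_max h.2.1 h'.2.1, max_le_max h.2.2 h'.2.2⟩

theorem tropical_segment_of_ultrametrics_general {m : ℕ}
    (u v : Fin m → Fin m → ℝ)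
    (hu : ThreePointCond u) (hv : ThreePointCond v)
    (c₁ c₂ : ℝ) (z : Fin m → Fin m → ℝ)
    (hz : z = fun i j => max (c₁ + u i j) (c₂ + v i j)) :
    ThreePointCond z := by
  subst hz
  intro i j k hij hik hjk
  exact ((hu i j k hij hik hjk).const_add c₁).max ((hv i j k hij hik hjk).const_add c₂)

/-- if `u` and `v` satisfy the three-point condition, then every
point `z` of the tropical line segment between them, i.e., every
`z_{ij} = max(c₁ + u_{ij}, c₂ + v_{ij})` with `c₁, c₂ ∈ ℝ`, also satisfies the
three-point condition.  Hence the tropical line segment between two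
ultrametrics stays in the space of ultrametrics (up to adding multiples of
the all-ones vector). -/
theorem tropical_segment_of_ultrametrics {m : ℕ} (hm : 3 ≤ m)
    (u v : Fin m → Fin m → ℝ)
    (hu_symm : ∀ i j, u i j = u j i) (hv_symm : ∀ i j, v i j = v j i)
    (hu : ThreePointCond u) (hv : ThreePointCond v)
    (c₁ c₂ : ℝ) (z : Fin m → Fin m → ℝ)
    (hz : z = fun i j => max (c₁ + u i j) (c₂ + v i j)) :
    ThreePointCond z :=
  tropical_segment_of_ultrametrics_general u v hu hv c₁ c₂ z hz
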